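/- arXiv:math/0203106 — 2 statements merged into one kernel-verified Lean document; each statement's English description precedes it below -/
import Mathlib

section
/- Let k be a field and A₀ a finitely generated commutative k-algebra. Then the functor from the category of commutative k-algebras to sets given by R ↦ Hom_{k-alg}(A₀, R[[t]]), with functoriality induced by applying a ring homomorphism R → R' coefficientwise to power series, is corepresentable: there exist a commutative k-algebra A_∞ and bijections Hom_{k-alg}(A_∞, R) ≅ Hom_{k-alg}(A₀, R[[t]]) natural in R. (This expresses that the arc space 𝔏(X) of an affine k-variety X = Spec A₀ is an affine k-scheme representing the functor R ↦ X(R[[t]]).) -/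
/-!
Adjoin to `k` one variable `x (a, n)` for every `a ∈ A₀` and `n ∈ ℕ`, to be read as the `n`-th
coefficient of the image of `a`, and divide by the coefficients of the equations expressing that
`a ↦ ∑ x (a, n) tⁿ` is a homomorphism of `k`-algebras. A homomorphism from the quotient to `R`
is then the same as a family of coefficients satisfying those equations, that is, an arc
`A₀ → R⟦t⟧`. Naturality holds because the correspondence is composition with the universal
arc, followed by change of coefficients.
-/

open PowerSeries

namespace ArcSpace

variable (k : Type*) [CommSemiring k] (A₀ : Type*)

noncomputable def genericArc (a : A₀) : (MvPolynomial (A₀ × ℕ) k)⟦X⟧ :=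
  mk fun n => MvPolynomial.X (a, n)

variable {k A₀} in
theorem mapAlgHom_aeval_genericArc {R : Type*} [CommSemiring R] [Algebra k R] (x : A₀ × ℕ → R)
    (a : A₀) : mapAlgHom (MvPolynomial.aeval x) (genericArc k A₀ a) = mk fun n => x (a, n) := by
  ext n
  simp [mapAlgHom_apply, genericArc]

variable [Semiring A₀] [Algebra k A₀]

inductive Rel : MvPolynomial (A₀ × ℕ) k → MvPolynomial (A₀ × ℕ) k → Prop
  | add (a b : A₀) (n : ℕ) :
      Rel (coeff n (genericArc k A₀ (a + b))) (coeff n (genericArc k A₀ a + genericArc k A₀ b))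
  | mul (a b : A₀) (n : ℕ) :
      Rel (coeff n (genericArc k A₀ (a * b))) (coeff n (genericArc k A₀ a * genericArc k A₀ b))
  | algebraMap (c : k) (n : ℕ) :
      Rel (coeff n (genericArc k A₀ (algebraMap k A₀ c))) (coeff n (algebraMap k _ c))

/-- The coordinate ring `A_∞` of the arc space of `Spec A₀`. -/
abbrev _root_.ArcAlgebra : Type _ := RingQuot (Rel k A₀)

variable {k A₀}

theorem map_mkAlgHom_eq_of_rel {p q : (MvPolynomial (A₀ × ℕ) k)⟦X⟧}
    (h : ∀ n, Rel k A₀ (coeff n p) (coeff n q)) :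
    mapAlgHom (RingQuot.mkAlgHom k (Rel k A₀)) p =
      mapAlgHom (RingQuot.mkAlgHom k (Rel k A₀)) q := by
  ext n
  simp only [mapAlgHom_apply, coeff_map, RingHom.coe_coe]
  exact RingQuot.mkAlgHom_rel k (h n)

variable (k A₀)

noncomputable def universalArc : A₀ →ₐ[k] (ArcAlgebra k A₀)⟦X⟧ where
  toFun a := mapAlgHom (RingQuot.mkAlgHom k (Rel k A₀)) (genericArc k A₀ a)
  map_add' a b := by
    rw [map_mkAlgHom_eq_of_rel (Rel.add a b), map_add]
  map_mul' a b := by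
    rw [map_mkAlgHom_eq_of_rel (Rel.mul a b), map_mul]
  map_one' := by
    rw [← map_one (algebraMap k A₀), map_mkAlgHom_eq_of_rel (Rel.algebraMap 1), map_one, map_one]
  map_zero' := by
    rw [← map_zero (algebraMap k A₀), map_mkAlgHom_eq_of_rel (Rel.algebraMap 0), map_zero,
      map_zero]
  commutes' c := by
    rw [map_mkAlgHom_eq_of_rel (Rel.algebraMap c), AlgHom.commutes]

variable {k A₀}

theorem coeff_universalArc (a : A₀) (n : ℕ) :
    coeff n (universalArc k A₀ a) = RingQuot.mkAlgHom k (Rel k A₀) (MvPolynomial.X (a, n)) := by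
  change coeff n (mapAlgHom _ (genericArc k A₀ a)) = _
  rw [mapAlgHom_apply, coeff_map, genericArc, coeff_mk, RingHom.coe_coe]

variable {R : Type*} [CommSemiring R] [Algebra k R]

noncomputable def arcCoeffs (f : A₀ →ₐ[k] R⟦X⟧) (q : A₀ × ℕ) : R := coeff q.2 (f q.1)

theorem mapAlgHom_aeval_arcCoeffs_genericArc (f : A₀ →ₐ[k] R⟦X⟧) (a : A₀) :
    mapAlgHom (MvPolynomial.aeval (arcCoeffs f)) (genericArc k A₀ a) = f a := by
  rw [mapAlgHom_aeval_genericArc]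
  ext n
  simp [arcCoeffs]

theorem aeval_arcCoeffs_eq_of_rel (f : A₀ →ₐ[k] R⟦X⟧) ⦃p q : MvPolynomial (A₀ × ℕ) k⦄
    (h : Rel k A₀ p q) :
    MvPolynomial.aeval (arcCoeffs f) p = MvPolynomial.aeval (arcCoeffs f) q := by
  have hcoeff (n : ℕ) (φ : (MvPolynomial (A₀ × ℕ) k)⟦X⟧) :
      MvPolynomial.aeval (arcCoeffs f) (coeff n φ) =
        coeff n (mapAlgHom (MvPolynomial.aeval (arcCoeffs f)) φ) := by
    simp [mapAlgHom_apply]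
  cases h with
  | add a b n => simp only [hcoeff, map_add, mapAlgHom_aeval_arcCoeffs_genericArc]
  | mul a b n => simp only [hcoeff, map_mul, mapAlgHom_aeval_arcCoeffs_genericArc]
  | algebraMap c n =>
    simp only [hcoeff, AlgHom.commutes, mapAlgHom_aeval_arcCoeffs_genericArc]

variable (R)

noncomputable def homEquiv : (ArcAlgebra k A₀ →ₐ[k] R) ≃ (A₀ →ₐ[k] R⟦X⟧) where
  toFun g := (mapAlgHom g).comp (universalArc k A₀)
  invFun f :=
    RingQuot.liftAlgHom k ⟨MvPolynomial.aeval (arcCoeffs f), aeval_arcCoeffs_eq_of_rel f⟩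
  left_inv g := by
    ext ⟨a, n⟩
    simp [arcCoeffs, mapAlgHom_apply, coeff_universalArc]
  right_inv f := by
    ext a n
    simp [mapAlgHom_apply, coeff_universalArc, arcCoeffs]

variable {R}

theorem homEquiv_comp {R' : Type*} [CommSemiring R'] [Algebra k R'] (f : R →ₐ[k] R')
    (g : ArcAlgebra k A₀ →ₐ[k] R) :
    homEquiv R' (f.comp g) = (mapAlgHom f).comp (homEquiv R g) := by
  ext a n
  simp [homEquiv, mapAlgHom_apply]

end ArcSpace

theorem arc_space_corepresentable_general (k : Type u) [Field k] (A₀ : Type u) [CommRing A₀]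
    [Algebra k A₀] :
    ∃ (A : Type u) (_ : CommRing A) (_ : Algebra k A),
      ∃ e : (R : Type u) → [inst : CommRing R] → [inst' : Algebra k R] →
          ((A →ₐ[k] R) ≃ (A₀ →ₐ[k] PowerSeries R)),
        ∀ (R R' : Type u) [CommRing R] [Algebra k R] [CommRing R'] [Algebra k R']
          (f : R →ₐ[k] R') (g : A →ₐ[k] R) (a : A₀),
            e R' (f.comp g) a = PowerSeries.map f.toRingHom (e R g a) := by
  refine ⟨ArcAlgebra k A₀, inferInstance, inferInstance, fun R _ _ => ArcSpace.homEquiv R, ?_⟩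
  intro R R' _ _ _ _ f g a
  rw [ArcSpace.homEquiv_comp]
  exact mapAlgHom_apply f _

/-- for a field `k` and a finitely generated commutative `k`-algebra `A₀`,
the functor `R ↦ Hom_{k-alg}(A₀, R[[t]])` on commutative `k`-algebras is corepresentable:
there is a commutative `k`-algebra `A∞` together with bijections
`Hom_{k-alg}(A∞, R) ≃ Hom_{k-alg}(A₀, R[[t]])` natural in `R` (naturality being expressed
via the coefficientwise action of a homomorphism `R → R'` on power series).
This expresses that the arc space `𝔏(X)` of the affine `k`-variety `X = Spec A₀` is an
affine `k`-scheme representing the functor `R ↦ X(R[[t]])`. -/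
theorem arc_space_corepresentable (k : Type u) [Field k] (A₀ : Type u) [CommRing A₀]
    [Algebra k A₀] (hfg : Algebra.FiniteType k A₀) :
    ∃ (A : Type u) (_ : CommRing A) (_ : Algebra k A),
      ∃ e : (R : Type u) → [inst : CommRing R] → [inst' : Algebra k R] →
          ((A →ₐ[k] R) ≃ (A₀ →ₐ[k] PowerSeries R)),
        ∀ (R R' : Type u) [CommRing R] [Algebra k R] [CommRing R'] [Algebra k R']
          (f : R →ₐ[k] R') (g : A →ₐ[k] R) (a : A₀),
            e R' (f.comp g) a = PowerSeries.map f.toRingHom (e R g a) :=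
  arc_space_corepresentable_general k A₀
end

section
/- Let k be a field, d ≥ 1, N ≥ 0, and let I be an ideal of the polynomial ring k[x₁,…,x_d]; set A₀ = k[x₁,…,x_d]/I. Then the functor from commutative k-algebras to sets given by R ↦ { φ ∈ Hom_{k-alg}(A₀, R((t))) : t^N·φ(x̄_i) ∈ R[[t]] for i = 1,…,d }, with functoriality induced by applying a ring homomorphism R → R' coefficientwise to Laurent series, is corepresentable by a commutative k-algebra. (This is the representability of the subfunctor X^{(N)} of X((t)), consisting of points of the affine variety X = Spec A₀ over R((t)) whose coordinates have poles of order at most N.) -/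
/-!
A point `φ` with poles of order at most `N` is determined by the power series `t^N φ(x̄ᵢ)`,
i.e. by a family of coefficients `a (i, n) ∈ R`, and the only constraint on this family is that
`f (t^{-N} ∑ₙ a (i, n) tⁿ) = 0` for every `f ∈ I`. Each coefficient of that Laurent series is
obtained by evaluating at `a` the corresponding coefficient of `f` at the universal series
`t^{-N} ∑ₙ X (i, n) tⁿ` over `k[X (i, n)]`. Hence the functor is corepresented by `k[X (i, n)]`
modulo the ideal generated by these universal coefficients.
-/

universe u

noncomputable section

namespace HahnSeries

variable {Γ R : Type*} [AddCommGroup Γ] [PartialOrder Γ] [IsOrderedAddMonoid Γ] [Semiring R]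

lemma single_mul_single_neg_mul (a : Γ) (x : R⟦Γ⟧) : single a 1 * (single (-a) 1 * x) = x := by
  rw [← mul_assoc, single_mul_single, add_neg_cancel, one_mul, single_zero_one, one_mul]

lemma single_neg_mul_single_mul (a : Γ) (x : R⟦Γ⟧) : single (-a) 1 * (single a 1 * x) = x := by
  simpa using single_mul_single_neg_mul (-a) x

end HahnSeries

namespace LaurentSeries

open HahnSeries

section Semiring

variable {R S : Type*} [Semiring R] [Semiring S]

lemma map_ofPowerSeries (f : R →+* S) (s : PowerSeries R) :
    (ofPowerSeries ℤ R s).map f = ofPowerSeries ℤ S (PowerSeries.map f s) := by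
  ext n
  simp only [map_coeff, PowerSeries.coeff_coe, PowerSeries.coeff_map]
  split_ifs <;> simp

variable (N : ℕ)

def shiftedMk (a : ℕ → R) : LaurentSeries R :=
  single (-(N : ℤ)) 1 * ofPowerSeries ℤ R (PowerSeries.mk a)

lemma single_mul_shiftedMk (a : ℕ → R) :
    single (N : ℤ) 1 * shiftedMk N a = ofPowerSeries ℤ R (PowerSeries.mk a) :=
  single_mul_single_neg_mul _ _

def shiftedMkEquiv :
    (ℕ → R) ≃
      {x : LaurentSeries R // single (N : ℤ) 1 * x ∈ Set.range (ofPowerSeries ℤ R)} where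
  toFun a := ⟨shiftedMk N a, _, (single_mul_shiftedMk N a).symm⟩
  invFun x n := (single (N : ℤ) 1 * x.1).coeff n
  left_inv a := by
    ext n
    simp [single_mul_shiftedMk]
  right_inv := by
    rintro ⟨x, s, hs⟩
    have hcoeff : (PowerSeries.mk fun n => (ofPowerSeries ℤ R s).coeff n) = s := by ext; simp
    ext1
    dsimp only
    rw [← hs, shiftedMk, hcoeff, hs, single_neg_mul_single_mul]

def shiftedMkEquivPi (σ : Type*) :
    (σ × ℕ → R) ≃
      {x : σ → LaurentSeries R //
        ∀ i, single (N : ℤ) 1 * x i ∈ Set.range (ofPowerSeries ℤ R)} :=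
  (Equiv.curry _ _ _).trans <|
    (Equiv.piCongrRight fun _ => shiftedMkEquiv N).trans Equiv.subtypePiEquivPi.symm

end Semiring

variable {k R S : Type*} [CommSemiring k] [CommSemiring R] [Algebra k R] [CommSemiring S]
  [Algebra k S]

def mapAlgHom (f : R →ₐ[k] S) : LaurentSeries R →ₐ[k] LaurentSeries S where
  toFun x := x.map f.toRingHom
  map_one' := HahnSeries.map_one f.toRingHom.toMonoidWithZeroHom
  map_mul' _ _ := HahnSeries.map_mul f.toRingHom.toNonUnitalRingHom
  map_zero' := HahnSeries.map_zero f.toRingHom.toZeroHom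
  map_add' _ _ := HahnSeries.map_add f.toRingHom.toAddMonoidHom
  commutes' c := by
    simp only [algebraMap_apply', PowerSeries.algebraMap_apply, ofPowerSeries_C, C_apply]
    exact (HahnSeries.map_single f.toRingHom.toZeroHom).trans (congrArg _ (f.commutes c))

lemma mapAlgHom_apply (f : R →ₐ[k] S) (x : LaurentSeries R) :
    mapAlgHom f x = x.map f.toRingHom :=
  rfl

lemma mapAlgHom_single (f : R →ₐ[k] S) (m : ℤ) (r : R) :
    mapAlgHom f (single m r) = single m (f r) :=
  HahnSeries.map_single f.toRingHom.toZeroHom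

lemma mapAlgHom_shiftedMk (N : ℕ) (f : R →ₐ[k] S) (a : ℕ → R) :
    mapAlgHom f (shiftedMk N a) = shiftedMk N (f ∘ a) := by
  rw [shiftedMk, shiftedMk, map_mul, mapAlgHom_single, map_one, mapAlgHom_apply,
    map_ofPowerSeries]
  rfl

end LaurentSeries

namespace MvPolynomial

variable {σ k S : Type*} [CommRing k] [CommSemiring S] [Algebra k S]

def quotientAlgHomEquiv (J : Ideal (MvPolynomial σ k)) :
    (MvPolynomial σ k ⧸ J →ₐ[k] S) ≃ {x : σ → S // ∀ p ∈ J, aeval x p = 0} where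
  toFun g := ⟨fun i => g (Ideal.Quotient.mk J (X i)), fun p hp => by
    have hg : aeval (fun i => g (Ideal.Quotient.mk J (X i))) =
        g.comp (Ideal.Quotient.mkₐ k J) :=
      algHom_ext fun i => by simp
    simp [hg, Ideal.Quotient.eq_zero_iff_mem.2 hp]⟩
  invFun x := Ideal.Quotient.liftₐ J (aeval x.1) x.2
  left_inv g := Ideal.Quotient.algHom_ext _ <| by
    rw [Ideal.Quotient.liftₐ_comp]
    exact algHom_ext fun i => by simp
  right_inv x := by
    ext i
    exact (AlgHom.congr_fun (Ideal.Quotient.liftₐ_comp J (aeval x.1) x.2) (X i)).trans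
      (aeval_X _ _)

end MvPolynomial

open MvPolynomial LaurentSeries HahnSeries

variable {k σ R S : Type*} [CommRing k] [CommSemiring R] [Algebra k R] [CommSemiring S]
  [Algebra k S]

variable (k) in
def universalShiftedMk (N : ℕ) (i : σ) : LaurentSeries (MvPolynomial (σ × ℕ) k) :=
  shiftedMk N fun n => X (i, n)

lemma aeval_coeff_aeval_universalShiftedMk (N : ℕ) (a : σ × ℕ → R) (f : MvPolynomial σ k)
    (m : ℤ) :
    aeval a ((aeval (universalShiftedMk k N) f).coeff m) =
      (aeval (fun i => shiftedMk N fun n => a (i, n)) f).coeff m := by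
  change (LaurentSeries.mapAlgHom (aeval a) _).coeff m = _
  rw [comp_aeval_apply]
  simp only [universalShiftedMk, mapAlgHom_shiftedMk, Function.comp_def, aeval_X]

variable (I : Ideal (MvPolynomial σ k)) (N : ℕ)

def poleCoeffIdeal : Ideal (MvPolynomial (σ × ℕ) k) :=
  Ideal.span {c | ∃ f ∈ I, ∃ m : ℤ, (aeval (universalShiftedMk k N) f).coeff m = c}

lemma forall_mem_poleCoeffIdeal_iff (a : σ × ℕ → R) :
    (∀ c ∈ poleCoeffIdeal I N, aeval a c = 0) ↔
      ∀ f ∈ I, aeval (fun i => shiftedMk N fun n => a (i, n)) f = 0 := by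
  change poleCoeffIdeal I N ≤ RingHom.ker (aeval a) ↔ _
  rw [poleCoeffIdeal, Ideal.span_le]
  constructor
  · intro h f hf
    ext m
    simpa [aeval_coeff_aeval_universalShiftedMk] using h ⟨f, hf, m, rfl⟩
  · rintro h _ ⟨f, hf, m, rfl⟩
    simp [aeval_coeff_aeval_universalShiftedMk, h f hf]

/- Both sides are identified with the families `x : σ → R⸨X⸩` that have poles of order at most
`N` and are killed by `I`. -/
variable (R) in
def poleBoundedEquiv :
    (MvPolynomial (σ × ℕ) k ⧸ poleCoeffIdeal I N →ₐ[k] R) ≃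
      {φ : MvPolynomial σ k ⧸ I →ₐ[k] LaurentSeries R //
        ∀ i, single (N : ℤ) 1 * φ (Ideal.Quotient.mk I (X i)) ∈
          Set.range (ofPowerSeries ℤ R)} :=
  (quotientAlgHomEquiv _).trans <|
  (Equiv.subtypeEquivRight (forall_mem_poleCoeffIdeal_iff I N)).trans <|
  ((shiftedMkEquivPi N σ).subtypeEquiv fun _ => Iff.rfl).trans <|
  (Equiv.subtypeSubtypeEquivSubtypeInter _ _).trans <|
  (Equiv.subtypeEquivRight fun _ => and_comm).trans <|
  (Equiv.subtypeSubtypeEquivSubtypeInter _ _).symm.trans <|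
  ((quotientAlgHomEquiv I).subtypeEquiv fun _ => Iff.rfl).symm

lemma poleBoundedEquiv_apply_mk (g : MvPolynomial (σ × ℕ) k ⧸ poleCoeffIdeal I N →ₐ[k] R)
    (p : MvPolynomial σ k) :
    (poleBoundedEquiv R I N g).1 (Ideal.Quotient.mk I p) =
      aeval (fun i => shiftedMk N fun n => g (Ideal.Quotient.mk _ (X (i, n)))) p :=
  rfl

lemma poleBoundedEquiv_comp (g : MvPolynomial (σ × ℕ) k ⧸ poleCoeffIdeal I N →ₐ[k] R)
    (f : R →ₐ[k] S) (a : MvPolynomial σ k ⧸ I) :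
    (poleBoundedEquiv S I N (f.comp g)).1 a =
      ((poleBoundedEquiv R I N g).1 a).map f.toRingHom := by
  obtain ⟨p, rfl⟩ := Ideal.Quotient.mk_surjective a
  rw [poleBoundedEquiv_apply_mk, poleBoundedEquiv_apply_mk, ← LaurentSeries.mapAlgHom_apply,
    comp_aeval_apply (φ := LaurentSeries.mapAlgHom f)]
  simp only [mapAlgHom_shiftedMk]
  rfl

end

open MvPolynomial

theorem pole_order_functor_corepresentable_general (k : Type u) [Field k] (d N : ℕ)
    (I : Ideal (MvPolynomial (Fin d) k)) :
    ∃ (A : Type u) (_ : CommRing A) (_ : Algebra k A),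
      ∃ e : (R : Type u) → [inst : CommRing R] → [inst' : Algebra k R] →
          ((A →ₐ[k] R) ≃
            { φ : (MvPolynomial (Fin d) k ⧸ I) →ₐ[k] LaurentSeries R //
              ∀ i : Fin d, HahnSeries.single (N : ℤ) (1 : R) *
                  φ (Ideal.Quotient.mk I (X i)) ∈
                Set.range (HahnSeries.ofPowerSeries ℤ R) }),
        ∀ (R R' : Type u) [CommRing R] [Algebra k R] [CommRing R'] [Algebra k R']
          (f : R →ₐ[k] R') (g : A →ₐ[k] R) (a : MvPolynomial (Fin d) k ⧸ I),
            ((e R' (f.comp g) : Subtype _) : _ →ₐ[k] LaurentSeries R') a =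
              HahnSeries.map (((e R g : Subtype _) : _ →ₐ[k] LaurentSeries R) a)
                f.toRingHom :=
  ⟨_, inferInstance, inferInstance, fun R _ _ => poleBoundedEquiv R I N,
    fun _ _ _ _ _ _ f g a => poleBoundedEquiv_comp I N g f a⟩

/-- for a field `k`, `d ≥ 1`, `N ≥ 0` and an ideal `I` of `k[x₁,…,x_d]`,
with `A₀ = k[x₁,…,x_d]/I`, the functor on commutative `k`-algebras
`R ↦ { φ ∈ Hom_{k-alg}(A₀, R((t))) : t^N·φ(x̄_i) ∈ R[[t]] for all i }`
(the points of `X = Spec A₀` over `R((t))` with poles of order at most `N`)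
is corepresentable by a commutative `k`-algebra, naturally in `R` (naturality being
expressed via the coefficientwise action of a homomorphism `R → R'` on Laurent series). -/
theorem pole_order_functor_corepresentable (k : Type u) [Field k] (d N : ℕ) (hd : 1 ≤ d)
    (I : Ideal (MvPolynomial (Fin d) k)) :
    ∃ (A : Type u) (_ : CommRing A) (_ : Algebra k A),
      ∃ e : (R : Type u) → [inst : CommRing R] → [inst' : Algebra k R] →
          ((A →ₐ[k] R) ≃
            { φ : (MvPolynomial (Fin d) k ⧸ I) →ₐ[k] LaurentSeries R //
              ∀ i : Fin d, HahnSeries.single (N : ℤ) (1 : R) *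
                  φ (Ideal.Quotient.mk I (X i)) ∈
                Set.range (HahnSeries.ofPowerSeries ℤ R) }),
        ∀ (R R' : Type u) [CommRing R] [Algebra k R] [CommRing R'] [Algebra k R']
          (f : R →ₐ[k] R') (g : A →ₐ[k] R) (a : MvPolynomial (Fin d) k ⧸ I),
            ((e R' (f.comp g) : Subtype _) : _ →ₐ[k] LaurentSeries R') a =
              HahnSeries.map (((e R g : Subtype _) : _ →ₐ[k] LaurentSeries R) a)
                f.toRingHom :=
  pole_order_functor_corepresentable_general k d N I
end
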